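/- For every positive integer n, the number of partitions of n into odd parts equals the number of odd divisors of n, plus the number of partitions of n (dimension ≥ 2) in which all parts are odd except the smallest part which is even and with k₁ > k_m, plus the number of partitions of n (dimension ≥ 2) in which all parts are odd except the largest part which is even and with k₁ < k_m. -/

import Mathlib

/-- A partition `(λ₁,...,λ_m)×[k₁,...,k_m]`: strictly decreasing positive parts
with positive multiplicities, same length. -/
def IsPart (p : List ℕ × List ℕ) : Prop :=
  p.1.length = p.2.length ∧ List.Chain' (· > ·) p.1 ∧
  (∀ x ∈ p.1, 0 < x) ∧ (∀ x ∈ p.2, 0 < x)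

/-- size of a partition: Σ kᵢ λᵢ -/
def psize (p : List ℕ × List ℕ) : ℕ := (List.zipWith (· * ·) p.1 p.2).sum

def parts1 (L : List ℕ) : ℕ := L.headD 0      -- λ₁
def parts2 (L : List ℕ) : ℕ := L.tail.headD 0 -- λ₂
def parts3 (L : List ℕ) : ℕ := L.tail.tail.headD 0 -- λ₃
def partsLast (L : List ℕ) : ℕ := L.getLastD 0 -- λ_m
def partsPrelast (L : List ℕ) : ℕ := L.dropLast.getLastD 0 -- λ_{m-1}

def T0parts : List ℕ → List ℕ
  | a :: b :: t => b :: (t ++ [a - b])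
  | l => l

def T0mults : List ℕ → List ℕ
  | a :: b :: t => (a + b) :: (t ++ [a])
  | l => l

def T1parts (L : List ℕ) : List ℕ := (parts1 L - partsLast L) :: L.tail

def T1mults (K : List ℕ) : List ℕ := K.dropLast ++ [K.headD 0 + K.getLastD 0]

def TDparts (L : List ℕ) : List ℕ := L.tail

def TDmults : List ℕ → List ℕ
  | [a, b] => [2 * a + b]
  | a :: b :: t => (a + b) :: (t.dropLast ++ [a + t.getLastD 0])
  | l => l

def T0map (p : List ℕ × List ℕ) : List ℕ × List ℕ := (T0parts p.1, T0mults p.2)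
def T1map (p : List ℕ × List ℕ) : List ℕ × List ℕ := (T1parts p.1, T1mults p.2)

/-- △₀ : partitions of dimension ≥ 2 with λ₁ < λ₂ + λ_m -/
def Tri0 : Set (List ℕ × List ℕ) :=
  {p | IsPart p ∧ 2 ≤ p.1.length ∧ parts1 p.1 < parts2 p.1 + partsLast p.1}

/-- △₁ : partitions of dimension ≥ 2 with λ₁ > λ₂ + λ_m -/
def Tri1 : Set (List ℕ × List ℕ) :=
  {p | IsPart p ∧ 2 ≤ p.1.length ∧ parts2 p.1 + partsLast p.1 < parts1 p.1}

/-- M₀ : partitions of dimension ≥ 2 with k₁ > k_m -/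
def M0 : Set (List ℕ × List ℕ) :=
  {p | IsPart p ∧ 2 ≤ p.1.length ∧ p.2.getLastD 0 < p.2.headD 0}

/-- M₁ : partitions of dimension ≥ 2 with k₁ < k_m -/
def M1 : Set (List ℕ × List ℕ) :=
  {p | IsPart p ∧ 2 ≤ p.1.length ∧ p.2.headD 0 < p.2.getLastD 0}

/-- △_d^G : partitions with λ₂ + dλ_m < λ₁ < λ₂ + (d+1)λ_m -/
def GaussSet (d : ℕ) : Set (List ℕ × List ℕ) :=
  {p | IsPart p ∧ 2 ≤ p.1.length ∧
    parts2 p.1 + d * partsLast p.1 < parts1 p.1 ∧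
    parts1 p.1 < parts2 p.1 + (d + 1) * partsLast p.1}

/-!
A partition of `n` into odd parts of dimension one is `(d)×[n/d]` for an odd divisor `d` of `n`.
In dimension at least two the parts `λ₁, λ₂, λ_m` are odd, so `λ₁ ≠ λ₂ + λ_m` and the partition
lies in `Tri0` or in `Tri1`. Splitting each of the `k₁` copies of `λ₁` as `λ₂ + (λ₁ - λ₂)` on `Tri0`
(this is `T0map`), or as `(λ₁ - λ_m) + λ_m` on `Tri1` (this is `T1map`), creates a single even part,
which is the smallest resp. the largest one, and makes `k_m < k₁` resp. `k₁ < k_m`. Merging the two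
parts back inverts both maps.
-/

lemma getLastD_le_of_pairwise_gt {α : Type*} [Preorder α] {L : List α}
    (hL : L.Pairwise (· > ·)) {x : α} (hx : x ∈ L) (d : α) : L.getLastD d ≤ x := by
  rcases L.eq_nil_or_concat with rfl | ⟨s, z, rfl⟩
  · simp at hx
  simp only [List.concat_eq_append, List.pairwise_append, List.mem_append, List.mem_singleton,
    List.getLastD_concat] at hL hx ⊢
  rcases hx with hx | rfl
  · exact (hL.2.2 x hx z rfl).le
  · exact le_rfl

@[simp]
lemma getLastD_cons_append_singleton {α : Type*} (a z d : α) (s : List α) :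
    (a :: (s ++ [z])).getLastD d = z := by
  rw [← List.cons_append, List.getLastD_concat]

@[simp]
lemma dropLast_cons_append_singleton {α : Type*} (a z : α) (s : List α) :
    (a :: (s ++ [z])).dropLast = a :: s := by
  rw [← List.cons_append, List.dropLast_concat]

@[simp] lemma parts1_cons (a : ℕ) (L : List ℕ) : parts1 (a :: L) = a := rfl

@[simp] lemma parts2_cons_cons (a b : ℕ) (L : List ℕ) : parts2 (a :: b :: L) = b := rfl

@[simp]
lemma partsLast_cons_append_singleton (a z : ℕ) (s : List ℕ) : partsLast (a :: (s ++ [z])) = z :=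
  getLastD_cons_append_singleton a z 0 s

lemma parts2_mem_tail {L : List ℕ} (h : 2 ≤ L.length) : parts2 L ∈ L.tail := by
  obtain _ | ⟨a, _ | ⟨b, t⟩⟩ := L
  · simp at h
  · simp at h
  simp

lemma partsLast_mem_tail {L : List ℕ} (h : 2 ≤ L.length) : partsLast L ∈ L.tail := by
  obtain _ | ⟨a, _ | ⟨b, t⟩⟩ := L
  · simp at h
  · simp at h
  rw [partsLast, List.getLastD_cons, List.getLastD_cons, List.tail_cons]
  exact List.getLastD_mem_cons

lemma parts1_ne_parts2_add_partsLast {L : List ℕ} (h2 : 2 ≤ L.length) (hodd : ∀ x ∈ L, Odd x) :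
    parts1 L ≠ parts2 L + partsLast L := by
  obtain _ | ⟨a, L⟩ := L
  · simp at h2
  obtain ⟨i, hi⟩ := hodd a List.mem_cons_self
  obtain ⟨j, hj⟩ := hodd _ (List.mem_cons_of_mem a (parts2_mem_tail h2))
  obtain ⟨k, hk⟩ := hodd _ (List.mem_cons_of_mem a (partsLast_mem_tail h2))
  rw [parts1_cons]
  omega

lemma isPart_iff {p : List ℕ × List ℕ} :
    IsPart p ↔ p.1.length = p.2.length ∧ p.1.Pairwise (· > ·) ∧
      (∀ x ∈ p.1, 0 < x) ∧ ∀ x ∈ p.2, 0 < x :=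
  and_congr_right' (and_congr_left' List.isChain_iff_pairwise)

@[simp] lemma isPart_nil : IsPart ([], []) := isPart_iff.2 (by simp)

@[simp]
lemma isPart_cons {a c : ℕ} {L K : List ℕ} :
    IsPart (a :: L, c :: K) ↔ IsPart (L, K) ∧ (∀ x ∈ L, x < a) ∧ 0 < a ∧ 0 < c := by
  simp only [isPart_iff, List.length_cons, List.pairwise_cons, List.mem_cons, forall_eq_or_imp]
  grind

@[simp]
lemma isPart_append_singleton {z f : ℕ} {L K : List ℕ} :
    IsPart (L ++ [z], K ++ [f]) ↔ IsPart (L, K) ∧ (∀ x ∈ L, z < x) ∧ 0 < z ∧ 0 < f := by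
  simp only [isPart_iff, List.length_append, List.pairwise_append, List.mem_append,
    List.mem_singleton, List.pairwise_singleton, or_imp, forall_and, forall_eq]
  grind

namespace IsPart

variable {p : List ℕ × List ℕ}

lemma partsLast_le (hp : IsPart p) : ∀ x ∈ p.1, partsLast p.1 ≤ x :=
  fun _ hx => getLastD_le_of_pairwise_gt (isPart_iff.1 hp).2.1 hx 0

lemma le_parts2 (hp : IsPart p) : ∀ x ∈ p.1.tail, x ≤ parts2 p.1 := by
  obtain ⟨_ | ⟨a, _ | ⟨b, t⟩⟩, K⟩ := p
  · simp
  · simp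
  intro x hx
  rcases List.mem_cons.1 hx with rfl | hx
  · exact le_rfl
  · exact (List.rel_of_pairwise_cons (isPart_iff.1 hp).2.1.of_cons hx).le

lemma exists_eq_cons_cons (hp : IsPart p) (h2 : 2 ≤ p.1.length) :
    ∃ a b t c d u, p = (a :: b :: t, c :: d :: u) := by
  obtain ⟨_ | ⟨a, _ | ⟨b, t⟩⟩, _ | ⟨c, _ | ⟨d, u⟩⟩⟩ := p <;> simp_all [IsPart]

lemma exists_eq_cons_append (hp : IsPart p) (h2 : 2 ≤ p.1.length) :
    ∃ a s z c u f, p = (a :: (s ++ [z]), c :: (u ++ [f])) := by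
  obtain ⟨a, b, t, c, d, u, rfl⟩ := hp.exists_eq_cons_cons h2
  obtain ⟨s, z, hs⟩ := (b :: t).eq_nil_or_concat.resolve_left (List.cons_ne_nil _ _)
  obtain ⟨v, f, hv⟩ := (d :: u).eq_nil_or_concat.resolve_left (List.cons_ne_nil _ _)
  exact ⟨a, s, z, c, v, f, by simp_all⟩

end IsPart

@[simp] lemma psize_nil_left (K : List ℕ) : psize ([], K) = 0 := by simp [psize]

@[simp]
lemma psize_cons (a c : ℕ) (L K : List ℕ) : psize (a :: L, c :: K) = a * c + psize (L, K) := by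
  simp [psize]

lemma psize_append_singleton {L K : List ℕ} (h : L.length = K.length) (z f : ℕ) :
    psize (L ++ [z], K ++ [f]) = psize (L, K) + z * f := by
  simp [psize, List.zipWith_append h]

lemma IsPart.le_psize {p : List ℕ × List ℕ} (hp : IsPart p) :
    p.1.length ≤ psize p ∧ (∀ x ∈ p.1, x ≤ psize p) ∧ ∀ x ∈ p.2, x ≤ psize p := by
  obtain ⟨L, K⟩ := p
  induction L generalizing K with
  | nil => obtain rfl : K = [] := List.eq_nil_of_length_eq_zero hp.1.symm; simp
  | cons a L ih =>
    obtain _ | ⟨c, K⟩ := K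
    · exact absurd hp.1 (by simp)
    obtain ⟨hLK, -, ha, hc⟩ := isPart_cons.1 hp
    obtain ⟨hlen, hL, hK⟩ := ih K hLK
    dsimp only at hlen hL hK
    have hac : a ≤ a * c := Nat.le_mul_of_pos_right a hc
    have hca : c ≤ a * c := Nat.le_mul_of_pos_left c ha
    simp only [psize_cons, List.length_cons, List.mem_cons, forall_eq_or_imp]
    exact ⟨by omega, ⟨by omega, fun x hx => by have := hL x hx; omega⟩,
      by omega, fun x hx => by have := hK x hx; omega⟩

lemma finite_setOf_length_le_forall_le (n : ℕ) :
    {l : List ℕ | l.length ≤ n ∧ ∀ x ∈ l, x ≤ n}.Finite := by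
  refine ((List.finite_length_le (Fin (n + 1)) n).image (List.map Fin.val)).subset ?_
  rintro l ⟨hlen, hle⟩
  refine ⟨l.map fun x => ⟨min x n, Nat.lt_succ_of_le (min_le_right x n)⟩, by simpa using hlen, ?_⟩
  rw [List.map_map]
  conv_rhs => rw [← List.map_id l]
  exact List.map_congr_left fun x hx => by simpa using hle x hx

lemma finite_setOf_isPart_psize_eq (n : ℕ) : {p | IsPart p ∧ psize p = n}.Finite := by
  refine ((finite_setOf_length_le_forall_le n).prod (finite_setOf_length_le_forall_le n)).subset ?_
  rintro p ⟨hp, rfl⟩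
  obtain ⟨hlen, h1, h2⟩ := hp.le_psize
  exact ⟨⟨hlen, h1⟩, hp.1 ▸ hlen, h2⟩

def oddParts (n : ℕ) : Set (List ℕ × List ℕ) :=
  {p | IsPart p ∧ psize p = n ∧ ∀ x ∈ p.1, Odd x}

def evenLastParts (n : ℕ) : Set (List ℕ × List ℕ) :=
  {p | IsPart p ∧ 2 ≤ p.1.length ∧ psize p = n ∧
    (∀ x ∈ p.1.dropLast, Odd x) ∧ Even (partsLast p.1) ∧ p.2.getLastD 0 < p.2.headD 0}

def evenFirstParts (n : ℕ) : Set (List ℕ × List ℕ) :=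
  {p | IsPart p ∧ 2 ≤ p.1.length ∧ psize p = n ∧
    (∀ x ∈ p.1.tail, Odd x) ∧ Even (parts1 p.1) ∧ p.2.headD 0 < p.2.getLastD 0}

lemma bijOn_oddDivisors {n : ℕ} (hn : 0 < n) :
    Set.BijOn (fun d => ([d], [n / d])) {d | d ∣ n ∧ Odd d} {p ∈ oddParts n | p.1.length = 1} := by
  refine ⟨fun d ⟨hd, hodd⟩ => ?_, fun d _ d' _ h => ?_, fun p hp => ?_⟩
  · have hq : 0 < n / d := Nat.div_pos (Nat.le_of_dvd hn hd) hodd.pos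
    refine ⟨⟨?_, ?_, by simpa using hodd⟩, rfl⟩
    · simp [hodd.pos, hq]
    · simp [Nat.mul_div_cancel' hd]
  · simpa using congrArg Prod.fst h
  · obtain ⟨⟨hpart, rfl, hodd⟩, h1⟩ := hp
    obtain ⟨L, K⟩ := p
    obtain ⟨x, rfl⟩ := List.length_eq_one_iff.1 h1
    obtain ⟨k, rfl⟩ := List.length_eq_one_iff.1 (hpart.1.symm.trans h1)
    have hx : 0 < x := (isPart_cons.1 hpart).2.2.1
    refine ⟨x, ⟨⟨k, by simp⟩, hodd x (by simp)⟩, ?_⟩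
    simp [Nat.mul_div_cancel_left k hx]

def T0mapInv (p : List ℕ × List ℕ) : List ℕ × List ℕ :=
  ((partsLast p.1 + parts1 p.1) :: p.1.dropLast,
    p.2.getLastD 0 :: (p.2.headD 0 - p.2.getLastD 0) :: p.2.tail.dropLast)

lemma T0map_cons_cons (a b c d : ℕ) (t u : List ℕ) :
    T0map (a :: b :: t, c :: d :: u) = (b :: (t ++ [a - b]), (c + d) :: (u ++ [c])) := rfl

lemma T0mapInv_cons_append (b z e c : ℕ) (t u : List ℕ) :
    T0mapInv (b :: (t ++ [z]), e :: (u ++ [c])) = ((z + b) :: b :: t, c :: (e - c) :: u) := by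
  simp [T0mapInv, List.getLast?_cons]

lemma mapsTo_T0map (n : ℕ) : Set.MapsTo T0map (oddParts n ∩ Tri0) (evenLastParts n) := by
  rintro p ⟨⟨hp, rfl, hodd⟩, -, h2, htri⟩
  have hlast := hp.partsLast_le
  obtain ⟨a, b, t, c, d, u, rfl⟩ := hp.exists_eq_cons_cons h2
  simp only [isPart_cons, List.mem_cons, forall_eq_or_imp] at hp hodd hlast
  simp only [parts1_cons, parts2_cons_cons] at htri
  obtain ⟨⟨htu, htb, hb, hd⟩, ⟨hba, -⟩, -, hc⟩ := hp
  obtain ⟨-, hlb, hlt⟩ := hlast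
  rw [T0map_cons_cons]
  refine ⟨?_, by simp, ?_, by simpa using hodd.2, ?_, ?_⟩
  · rw [← List.cons_append, ← List.cons_append]
    simp only [isPart_append_singleton, isPart_cons, List.mem_cons, forall_eq_or_imp]
    exact ⟨⟨htu, htb, hb, by omega⟩, ⟨by omega, fun x hx => by have := hlt x hx; omega⟩,
      by omega, hc⟩
  · rw [← List.cons_append, ← List.cons_append, psize_append_singleton (by simpa using htu.1)]
    simp only [psize_cons]
    zify [hba.le]
    ring
  · rw [partsLast_cons_append_singleton]
    exact Nat.Odd.sub_odd hodd.1 hodd.2.1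
  · simp only [getLastD_cons_append_singleton, List.headD_cons]
    omega

lemma mapsTo_T0mapInv (n : ℕ) : Set.MapsTo T0mapInv (evenLastParts n) (oddParts n ∩ Tri0) := by
  rintro p ⟨hp, h2, rfl, hodd, heven, hmult⟩
  obtain ⟨b, s, z, e, v, c, rfl⟩ := hp.exists_eq_cons_append h2
  simp only [isPart_cons, isPart_append_singleton, List.mem_append, List.mem_singleton,
    or_imp, forall_and, forall_eq] at hp
  simp only [dropLast_cons_append_singleton, List.mem_cons, forall_eq_or_imp] at hodd
  simp only [partsLast_cons_append_singleton] at heven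
  simp only [getLastD_cons_append_singleton, List.headD_cons] at hmult
  obtain ⟨⟨hsv, hzs, hz, hc⟩, ⟨hsb, hzb⟩, hb, -⟩ := hp
  rw [T0mapInv_cons_append]
  have hpart : IsPart ((z + b) :: b :: s, c :: (e - c) :: v) := by
    simp only [isPart_cons, List.mem_cons, forall_eq_or_imp]
    exact ⟨⟨hsv, hsb, hb, by omega⟩, ⟨by omega, fun x hx => by have := hsb x hx; omega⟩,
      by omega, hc⟩
  refine ⟨⟨hpart, ?_, ?_⟩, hpart, by simp, ?_⟩
  · rw [← List.cons_append, ← List.cons_append, psize_append_singleton (by simpa using hsv.1)]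
    simp only [psize_cons]
    zify [hmult.le]
    ring
  · simp only [List.mem_cons, forall_eq_or_imp]
    exact ⟨heven.add_odd hodd.1, hodd⟩
  · have hz_lt : ∀ x ∈ b :: s, z < x := by simpa [hzb] using hzs
    have := hz_lt _ (partsLast_mem_tail (L := (z + b) :: b :: s) (by simp))
    simp only [parts1_cons, parts2_cons_cons]
    omega

lemma bijOn_T0map (n : ℕ) : Set.BijOn T0map (oddParts n ∩ Tri0) (evenLastParts n) := by
  refine Set.InvOn.bijOn ⟨?_, ?_⟩ (mapsTo_T0map n) (mapsTo_T0mapInv n)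
  · rintro p ⟨⟨hp, -⟩, -, h2, -⟩
    obtain ⟨a, b, t, c, d, u, rfl⟩ := hp.exists_eq_cons_cons h2
    have hba : b < a := (isPart_cons.1 hp).2.1 b List.mem_cons_self
    rw [T0map_cons_cons, T0mapInv_cons_append, Nat.sub_add_cancel hba.le, Nat.add_sub_cancel_left]
  · rintro p ⟨hp, h2, -, -, -, hmult⟩
    obtain ⟨b, s, z, e, v, c, rfl⟩ := hp.exists_eq_cons_append h2
    simp only [getLastD_cons_append_singleton, List.headD_cons] at hmult
    rw [T0mapInv_cons_append, T0map_cons_cons, Nat.add_sub_cancel, Nat.add_sub_cancel' hmult.le]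

def T1mapInv (p : List ℕ × List ℕ) : List ℕ × List ℕ :=
  ((parts1 p.1 + partsLast p.1) :: p.1.tail, p.2.dropLast ++ [p.2.getLastD 0 - p.2.headD 0])

lemma T1map_cons_append (a z c f : ℕ) (s u : List ℕ) :
    T1map (a :: (s ++ [z]), c :: (u ++ [f])) = ((a - z) :: (s ++ [z]), c :: (u ++ [c + f])) := by
  simp [T1map, T1parts, T1mults, List.getLast?_cons]

lemma T1mapInv_cons_append (g z c h : ℕ) (s u : List ℕ) :
    T1mapInv (g :: (s ++ [z]), c :: (u ++ [h])) = ((g + z) :: (s ++ [z]), c :: (u ++ [h - c])) := by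
  simp [T1mapInv, List.getLast?_cons]

lemma mapsTo_T1map (n : ℕ) : Set.MapsTo T1map (oddParts n ∩ Tri1) (evenFirstParts n) := by
  rintro p ⟨⟨hp, rfl, hodd⟩, -, h2, htri⟩
  have hmax := hp.le_parts2
  obtain ⟨a, s, z, c, u, f, rfl⟩ := hp.exists_eq_cons_append h2
  simp only [List.tail_cons] at hmax
  simp only [parts1_cons, partsLast_cons_append_singleton] at htri
  simp only [isPart_cons, isPart_append_singleton] at hp
  obtain ⟨⟨hsu, hzs, hz, hf⟩, -, -, hc⟩ := hp
  have hza : z ≤ a := by have := hmax z (by simp); omega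
  rw [T1map_cons_append]
  refine ⟨?_, by simp, ?_, fun x hx => hodd x (List.mem_cons_of_mem a hx), ?_, ?_⟩
  · simp only [isPart_cons, isPart_append_singleton]
    exact ⟨⟨hsu, hzs, hz, by omega⟩, fun x hx => by have := hmax x hx; omega, by omega, hc⟩
  · rw [psize_cons, psize_cons, psize_append_singleton hsu.1, psize_append_singleton hsu.1]
    zify [hza]
    ring
  · exact Nat.Odd.sub_odd (hodd a (by simp)) (hodd z (by simp))
  · simp only [getLastD_cons_append_singleton, List.headD_cons]
    omega

lemma mapsTo_T1mapInv (n : ℕ) : Set.MapsTo T1mapInv (evenFirstParts n) (oddParts n ∩ Tri1) := by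
  rintro p ⟨hp, h2, rfl, hodd, heven, hmult⟩
  obtain ⟨g, s, z, c, u, h, rfl⟩ := hp.exists_eq_cons_append h2
  simp only [isPart_cons, isPart_append_singleton] at hp
  simp only [List.tail_cons] at hodd
  simp only [parts1_cons] at heven
  simp only [getLastD_cons_append_singleton, List.headD_cons] at hmult
  obtain ⟨⟨hsu, hzs, hz, hh⟩, hsg, hg, hc⟩ := hp
  rw [T1mapInv_cons_append]
  have hpart : IsPart ((g + z) :: (s ++ [z]), c :: (u ++ [h - c])) := by
    simp only [isPart_cons, isPart_append_singleton]
    exact ⟨⟨hsu, hzs, hz, by omega⟩, fun x hx => by have := hsg x hx; omega, by omega, hc⟩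
  refine ⟨⟨hpart, ?_, ?_⟩, hpart, by simp, ?_⟩
  · rw [psize_cons, psize_cons, psize_append_singleton hsu.1, psize_append_singleton hsu.1]
    zify [hmult.le]
    ring
  · simp only [List.mem_cons, forall_eq_or_imp]
    exact ⟨heven.add_odd (hodd z (by simp)), hodd⟩
  · have := hsg _ (parts2_mem_tail (L := (g + z) :: (s ++ [z])) (by simp))
    simp only [parts1_cons, partsLast_cons_append_singleton]
    omega

lemma bijOn_T1map (n : ℕ) : Set.BijOn T1map (oddParts n ∩ Tri1) (evenFirstParts n) := by
  refine Set.InvOn.bijOn ⟨?_, ?_⟩ (mapsTo_T1map n) (mapsTo_T1mapInv n)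
  · rintro p ⟨⟨hp, -⟩, -, h2, htri⟩
    have hmax := hp.le_parts2
    obtain ⟨a, s, z, c, u, f, rfl⟩ := hp.exists_eq_cons_append h2
    have hza : z ≤ a := by
      have := hmax z (by simp)
      simp only [parts1_cons, partsLast_cons_append_singleton] at htri
      omega
    rw [T1map_cons_append, T1mapInv_cons_append, Nat.sub_add_cancel hza, Nat.add_sub_cancel_left]
  · rintro p ⟨hp, h2, -, -, -, hmult⟩
    obtain ⟨g, s, z, c, u, h, rfl⟩ := hp.exists_eq_cons_append h2
    simp only [getLastD_cons_append_singleton, List.headD_cons] at hmult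
    rw [T1mapInv_cons_append, T1map_cons_append, Nat.add_sub_cancel, Nat.add_sub_cancel' hmult.le]

lemma oddParts_eq_union {n : ℕ} (hn : 0 < n) :
    oddParts n = {p ∈ oddParts n | p.1.length = 1} ∪ oddParts n ∩ Tri0 ∪ oddParts n ∩ Tri1 := by
  refine subset_antisymm (fun p hp => ?_)
    (Set.union_subset (Set.union_subset (Set.sep_subset _ _) Set.inter_subset_left)
      Set.inter_subset_left)
  obtain ⟨hpart, hsize, hodd⟩ := hp
  obtain h0 | h1 | h2 : p.1.length = 0 ∨ p.1.length = 1 ∨ 2 ≤ p.1.length := by omega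
  · obtain ⟨L, K⟩ := p
    obtain rfl : L = [] := List.eq_nil_of_length_eq_zero h0
    rw [psize_nil_left] at hsize
    omega
  · exact Or.inl (Or.inl ⟨⟨hpart, hsize, hodd⟩, h1⟩)
  · rcases (parts1_ne_parts2_add_partsLast h2 hodd).lt_or_gt with htri | htri
    · exact Or.inl (Or.inr ⟨⟨hpart, hsize, hodd⟩, hpart, h2, htri⟩)
    · exact Or.inr ⟨⟨hpart, hsize, hodd⟩, hpart, h2, htri⟩

lemma ncard_oddParts {n : ℕ} (hn : 0 < n) :
    (oddParts n).ncard = {p ∈ oddParts n | p.1.length = 1}.ncard + (oddParts n ∩ Tri0).ncard +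
      (oddParts n ∩ Tri1).ncard := by
  have hfin : (oddParts n).Finite :=
    (finite_setOf_isPart_psize_eq n).subset fun p hp => ⟨hp.1, hp.2.1⟩
  have hdisj₀ : Disjoint {p ∈ oddParts n | p.1.length = 1} (oddParts n ∩ Tri0) :=
    Set.disjoint_left.2 fun p h1 h2 => by have := h1.2; have := h2.2.2.1; omega
  have hdisj : Disjoint ({p ∈ oddParts n | p.1.length = 1} ∪ oddParts n ∩ Tri0)
      (oddParts n ∩ Tri1) := by
    refine Set.disjoint_left.2 fun p h h3 => ?_
    have := h3.2.2.2
    rcases h with h1 | h2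
    · have := h1.2; have := h3.2.2.1; omega
    · have := h2.2.2.2; omega
  nth_rw 1 [oddParts_eq_union hn]
  rw [Set.ncard_union_eq hdisj ((hfin.subset (Set.sep_subset _ _)).union (hfin.inter_of_left _))
    (hfin.inter_of_left _), Set.ncard_union_eq hdisj₀ (hfin.subset (Set.sep_subset _ _))
    (hfin.inter_of_left _)]

theorem stmt18 (n : ℕ) (hn : 0 < n) :
    {p : List ℕ × List ℕ | IsPart p ∧ psize p = n ∧ ∀ x ∈ p.1, Odd x}.ncard =
      {d : ℕ | d ∣ n ∧ Odd d}.ncard +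
      {p : List ℕ × List ℕ | IsPart p ∧ 2 ≤ p.1.length ∧ psize p = n ∧
        (∀ x ∈ p.1.dropLast, Odd x) ∧ Even (partsLast p.1) ∧
        p.2.getLastD 0 < p.2.headD 0}.ncard +
      {p : List ℕ × List ℕ | IsPart p ∧ 2 ≤ p.1.length ∧ psize p = n ∧
        (∀ x ∈ p.1.tail, Odd x) ∧ Even (parts1 p.1) ∧
        p.2.headD 0 < p.2.getLastD 0}.ncard := by
  change (oddParts n).ncard = _ + (evenLastParts n).ncard + (evenFirstParts n).ncard
  rw [ncard_oddParts hn, (bijOn_oddDivisors hn).ncard_eq, (bijOn_T0map n).ncard_eq,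
    (bijOn_T1map n).ncard_eq]
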